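/- Every tree in the family 𝒯 (trees obtainable from P_4 by repeated application of operations O_1–O_4) satisfies γ_t(T) = τ(T) and, moreover, has a set which is simultaneously a minimum total dominating set and a minimum vertex cover. -/

import Mathlib

open SimpleGraph

/-- `D` is a total dominating set of `G`: every vertex has a neighbor in `D`. -/
def IsTotalDomSet {V : Type*} (G : SimpleGraph V) (D : Finset V) : Prop :=
  ∀ v : V, ∃ u ∈ D, G.Adj v u

/-- `X` is a vertex cover of `G`: every edge has an endpoint in `X`. -/
def IsVertexCover {V : Type*} (G : SimpleGraph V) (X : Finset V) : Prop :=
  ∀ ⦃a b : V⦄, G.Adj a b → a ∈ X ∨ b ∈ X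

/-- The total domination number `γ_t(G)`. -/
noncomputable def gammaT {V : Type*} (G : SimpleGraph V) : ℕ :=
  sInf {n | ∃ D : Finset V, IsTotalDomSet G D ∧ D.card = n}

/-- The vertex cover number `τ(G)`. -/
noncomputable def tau {V : Type*} (G : SimpleGraph V) : ℕ :=
  sInf {n | ∃ X : Finset V, _root_.IsVertexCover G X ∧ X.card = n}

/-- A `(γ_t-τ)`-set: simultaneously a minimum total dominating set and a
minimum vertex cover. -/
def IsGttSet {V : Type*} (G : SimpleGraph V) (D : Finset V) : Prop :=
  IsTotalDomSet G D ∧ _root_.IsVertexCover G D ∧ D.card = gammaT G ∧ D.card = tau G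

/-- The sum `G +_{uv} H`: the disjoint union of `G` and `H` with the extra edge `uv`. -/
def graphSum {α β : Type*} (G : SimpleGraph α) (H : SimpleGraph β) (u : α) (v : β) :
    SimpleGraph (α ⊕ β) :=
  SimpleGraph.fromRel (fun x y =>
    (∃ a b, x = Sum.inl a ∧ y = Sum.inl b ∧ G.Adj a b) ∨
    (∃ a b, x = Sum.inr a ∧ y = Sum.inr b ∧ H.Adj a b) ∨
    (x = Sum.inl u ∧ y = Sum.inr v))

/-- The private neighborhood `pn(u,S) = {w : N(w) ∩ S = {u}}`. -/
def pn {V : Type*} (G : SimpleGraph V) (S : Finset V) (u : V) : Set V :=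
  {w | G.neighborSet w ∩ ↑S = {u}}

/-- `v` is quasi-isolated: for some minimum total dominating set `S` there is
`u ∈ S` with `pn(u,S) = {v}`. -/
def QuasiIsolated {V : Type*} (G : SimpleGraph V) (v : V) : Prop :=
  ∃ S : Finset V, IsTotalDomSet G S ∧ S.card = gammaT G ∧ ∃ u ∈ S, pn G S u = {v}

/-- An end vertex: a vertex of degree 1. -/
def IsEndVertex {V : Type*} (G : SimpleGraph V) (v : V) : Prop :=
  (G.neighborSet v).ncard = 1

/-- The family `𝒯` of trees obtained from `P_4` by repeated application of the
operations `O_1`–`O_4` (closed under isomorphism). -/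
inductive InFamilyT : {V : Type} → SimpleGraph V → Prop where
  | base : InFamilyT (SimpleGraph.pathGraph 4)
  | iso {V W : Type} {G : SimpleGraph V} {H : SimpleGraph W} :
      InFamilyT G → Nonempty (G ≃g H) → InFamilyT H
  | op1 {V : Type} (T : SimpleGraph V) (u : V) :
      InFamilyT T → (∃ D : Finset V, IsGttSet T D ∧ u ∈ D) →
      InFamilyT (graphSum T (SimpleGraph.pathGraph 4) u 0)
  | op2 {V : Type} (T : SimpleGraph V) (u : V) :
      InFamilyT T → (∃ D : Finset V, IsGttSet T D ∧ u ∈ D) →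
      InFamilyT (graphSum T (⊥ : SimpleGraph Unit) u ())
  | op3 {V : Type} (T : SimpleGraph V) (u : V) :
      InFamilyT T → (∃ D : Finset V, IsGttSet T D ∧ u ∈ D) → ¬ QuasiIsolated T u →
      InFamilyT (graphSum T (SimpleGraph.pathGraph 2) u 0)
  | op4 {V : Type} (T : SimpleGraph V) (u : V) :
      InFamilyT T → ¬ QuasiIsolated T u →
      InFamilyT (graphSum T (SimpleGraph.pathGraph 4) u 1)

/-! Each operation raises `γ_t` and `τ` by the same amount (0 for `O_2`, 1 for `O_3`, 2 for
`O_1`, `O_4`), and a `(γ_t-τ)`-set `D` of `T` extends by the obvious vertices of the attached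
path. Lower bounds: a vertex cover of `T +_{uv} H` restricts to vertex covers of `T` and `H`. A
total dominating set `E` of the sum restricts to one of `T` unless `u` has no neighbour in
`E ∩ T`; then `E` contains `v`, and adding one neighbour `w` of `u` repairs the restriction at
cost 1. If that repaired set were minimum, `w` would have `u` as its only private neighbour, so
`u` would be quasi-isolated; this is why `O_3` and `O_4` require `u` not to be quasi-isolated. -/

open Finset

section Basic
variable {V W : Type*} {G : SimpleGraph V} {H : SimpleGraph W} {D : Finset V}

lemma gammaT_le_card (h : IsTotalDomSet G D) : gammaT G ≤ #D := Nat.sInf_le ⟨D, h, rfl⟩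

lemma tau_le_card (h : _root_.IsVertexCover G D) : tau G ≤ #D := Nat.sInf_le ⟨D, h, rfl⟩

lemma IsGttSet.of_forall_card_le (hT : IsTotalDomSet G D) (hC : _root_.IsVertexCover G D)
    (hTmin : ∀ E, IsTotalDomSet G E → #D ≤ #E)
    (hCmin : ∀ E, _root_.IsVertexCover G E → #D ≤ #E) : IsGttSet G D :=
  ⟨hT, hC,
    le_antisymm (le_csInf ⟨_, D, hT, rfl⟩ (by rintro _ ⟨E, hE, rfl⟩; exact hTmin E hE))
      (gammaT_le_card hT),
    le_antisymm (le_csInf ⟨_, D, hC, rfl⟩ (by rintro _ ⟨E, hE, rfl⟩; exact hCmin E hE))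
      (tau_le_card hC)⟩

lemma IsGttSet.gammaT_eq_tau (h : IsGttSet G D) : gammaT G = tau G :=
  h.2.2.1.symm.trans h.2.2.2

lemma IsTotalDomSet.map (e : G ≃g H) (h : IsTotalDomSet G D) :
    IsTotalDomSet H (D.map e.toEquiv.toEmbedding) := by
  intro w
  obtain ⟨x, hx, hadj⟩ := h (e.symm w)
  exact ⟨e x, mem_map_of_mem _ hx, by simpa using e.map_adj_iff.mpr hadj⟩

lemma IsVertexCover.map (e : G ≃g H) (h : _root_.IsVertexCover G D) :
    _root_.IsVertexCover H (D.map e.toEquiv.toEmbedding) := by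
  intro a b hadj
  rcases h (e.symm.map_adj_iff.mpr hadj) with h' | h'
  · exact .inl (by simpa using mem_map_of_mem e.toEquiv.toEmbedding h')
  · exact .inr (by simpa using mem_map_of_mem e.toEquiv.toEmbedding h')

lemma IsGttSet.map (e : G ≃g H) (h : IsGttSet G D) :
    IsGttSet H (D.map e.toEquiv.toEmbedding) := by
  obtain ⟨hT, hC, hγ, hτ⟩ := h
  refine .of_forall_card_le (hT.map e) (hC.map e) (fun E hE => ?_) (fun E hE => ?_)
  · calc #(D.map _) = gammaT G := by rw [card_map, hγ]
      _ ≤ #(E.map e.symm.toEquiv.toEmbedding) := gammaT_le_card (hE.map e.symm)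
      _ = #E := card_map _
  · calc #(D.map _) = tau G := by rw [card_map, hτ]
      _ ≤ #(E.map e.symm.toEquiv.toEmbedding) := tau_le_card (hE.map e.symm)
      _ = #E := card_map _

end Basic

section GraphSum
variable {α β : Type*} {G : SimpleGraph α} {H : SimpleGraph β} {u : α} {v : β}

@[simp] lemma graphSum_adj_inl_inl {a b : α} :
    (graphSum G H u v).Adj (.inl a) (.inl b) ↔ G.Adj a b := by
  simpa [graphSum, G.adj_comm b a] using fun h : G.Adj a b => h.ne

@[simp] lemma graphSum_adj_inr_inr {a b : β} :
    (graphSum G H u v).Adj (.inr a) (.inr b) ↔ H.Adj a b := by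
  simpa [graphSum, H.adj_comm b a] using fun h : H.Adj a b => h.ne

@[simp] lemma graphSum_adj_inl_inr {a : α} {b : β} :
    (graphSum G H u v).Adj (.inl a) (.inr b) ↔ a = u ∧ b = v := by
  simp [graphSum]

@[simp] lemma graphSum_adj_inr_inl {a : α} {b : β} :
    (graphSum G H u v).Adj (.inr b) (.inl a) ↔ a = u ∧ b = v :=
  (graphSum G H u v).adj_comm _ _ |>.trans graphSum_adj_inl_inr

lemma isTotalDomSet_graphSum_disjSum {D : Finset α} {B : Finset β} (hD : IsTotalDomSet G D)
    (hB : ∀ b, (∃ c ∈ B, H.Adj b c) ∨ (b = v ∧ u ∈ D)) :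
    IsTotalDomSet (graphSum G H u v) (D.disjSum B) := by
  rintro (a | b)
  · obtain ⟨d, hd, had⟩ := hD a
    exact ⟨.inl d, inl_mem_disjSum.mpr hd, graphSum_adj_inl_inl.mpr had⟩
  · rcases hB b with ⟨c, hc, hbc⟩ | ⟨rfl, hu⟩
    · exact ⟨.inr c, inr_mem_disjSum.mpr hc, graphSum_adj_inr_inr.mpr hbc⟩
    · exact ⟨.inl u, inl_mem_disjSum.mpr hu, graphSum_adj_inr_inl.mpr ⟨rfl, rfl⟩⟩

lemma isVertexCover_graphSum_disjSum {D : Finset α} {B : Finset β}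
    (hD : _root_.IsVertexCover G D) (hB : _root_.IsVertexCover H B) (huv : u ∈ D ∨ v ∈ B) :
    _root_.IsVertexCover (graphSum G H u v) (D.disjSum B) := by
  rintro (a | a) (b | b) hadj
  · simpa using hD (graphSum_adj_inl_inl.mp hadj)
  · obtain ⟨rfl, rfl⟩ := graphSum_adj_inl_inr.mp hadj
    simpa using huv
  · obtain ⟨rfl, rfl⟩ := graphSum_adj_inr_inl.mp hadj
    simpa [or_comm] using huv
  · simpa using hB (graphSum_adj_inr_inr.mp hadj)

lemma IsVertexCover.graphSum_toLeft {Y : Finset (α ⊕ β)}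
    (hY : _root_.IsVertexCover (graphSum G H u v) Y) : _root_.IsVertexCover G Y.toLeft :=
  fun _ _ hadj => by simpa using hY (graphSum_adj_inl_inl.mpr hadj)

lemma IsVertexCover.graphSum_toRight {Y : Finset (α ⊕ β)}
    (hY : _root_.IsVertexCover (graphSum G H u v) Y) : _root_.IsVertexCover H Y.toRight :=
  fun _ _ hadj => by simpa using hY (graphSum_adj_inr_inr.mpr hadj)

variable {E : Finset (α ⊕ β)}

lemma IsTotalDomSet.graphSum_toRight (hE : IsTotalDomSet (graphSum G H u v) E) {b : β}
    (hb : b ≠ v) : ∃ c ∈ E.toRight, H.Adj b c := by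
  obtain ⟨a | c, hx, hadj⟩ := hE (.inr b)
  · exact absurd (graphSum_adj_inr_inl.mp hadj).2 hb
  · exact ⟨c, mem_toRight.mpr hx, graphSum_adj_inr_inr.mp hadj⟩

lemma IsTotalDomSet.graphSum_insert_toLeft [DecidableEq α]
    (hE : IsTotalDomSet (graphSum G H u v) E) {w : α} (hw : G.Adj u w) :
    IsTotalDomSet G (insert w E.toLeft) := by
  intro z
  obtain ⟨a | b, hx, hadj⟩ := hE (.inl z)
  · exact ⟨a, mem_insert_of_mem (mem_toLeft.mpr hx), graphSum_adj_inl_inl.mp hadj⟩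
  · obtain ⟨rfl, -⟩ := graphSum_adj_inl_inr.mp hadj
    exact ⟨w, mem_insert_self _ _, hw⟩

lemma IsTotalDomSet.graphSum_cases (hE : IsTotalDomSet (graphSum G H u v) E) :
    IsTotalDomSet G E.toLeft ∨ (v ∈ E.toRight ∧ ∀ a ∈ E.toLeft, ¬ G.Adj u a) := by
  by_cases h : ∃ a ∈ E.toLeft, G.Adj u a
  · obtain ⟨a₀, ha₀, hua₀⟩ := h
    refine .inl fun z => ?_
    obtain ⟨a | b, hx, hadj⟩ := hE (.inl z)
    · exact ⟨a, mem_toLeft.mpr hx, graphSum_adj_inl_inl.mp hadj⟩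
    · obtain ⟨rfl, -⟩ := graphSum_adj_inl_inr.mp hadj
      exact ⟨a₀, ha₀, hua₀⟩
  · push Not at h
    obtain ⟨a | b, hx, hadj⟩ := hE (.inl u)
    · exact absurd (graphSum_adj_inl_inl.mp hadj) (h a (mem_toLeft.mpr hx))
    · obtain ⟨-, rfl⟩ := graphSum_adj_inl_inr.mp hadj
      exact .inr ⟨mem_toRight.mpr hx, h⟩

lemma IsTotalDomSet.gammaT_le_graphSum_toLeft_or (hE : IsTotalDomSet (graphSum G H u v) E)
    {w : α} (hw : G.Adj u w) :
    gammaT G ≤ #E.toLeft ∨ (v ∈ E.toRight ∧ gammaT G ≤ #E.toLeft + 1) := by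
  classical
  rcases hE.graphSum_cases with hL | ⟨hv, -⟩
  · exact .inl (gammaT_le_card hL)
  · exact .inr ⟨hv, (gammaT_le_card (hE.graphSum_insert_toLeft hw)).trans (card_insert_le _ _)⟩

/-- In `S = insert w E.toLeft`, the vertex `u` has `w` as its only neighbour, and every other
vertex has a neighbour in `E.toLeft`, so `pn(w, S) = {u}`. -/
lemma quasiIsolated_of_graphSum [DecidableEq α] (hE : IsTotalDomSet (graphSum G H u v) E)
    (hu : ∀ a ∈ E.toLeft, ¬ G.Adj u a) {w : α} (hw : G.Adj u w)
    (hmin : #(insert w E.toLeft) = gammaT G) : QuasiIsolated G u := by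
  refine ⟨_, hE.graphSum_insert_toLeft hw, hmin, w, mem_insert_self _ _, ?_⟩
  have hwL : w ∉ E.toLeft := fun h => hu w h hw
  ext z
  simp only [pn, Set.mem_ofPred_eq, Set.mem_singleton_iff]
  constructor
  · intro hz
    obtain ⟨a | b, hx, hadj⟩ := hE (.inl z)
    · have ha : a ∈ G.neighborSet z ∩ ↑(insert w E.toLeft) :=
        ⟨graphSum_adj_inl_inl.mp hadj, by simp [hx]⟩
      rw [hz, Set.mem_singleton_iff] at ha
      exact absurd (ha ▸ mem_toLeft.mpr hx) hwL
    · exact (graphSum_adj_inl_inr.mp hadj).1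
  · rintro rfl
    ext y
    simp only [Set.mem_inter_iff, mem_neighborSet, coe_insert, Set.mem_insert_iff,
      mem_coe, Set.mem_singleton_iff]
    constructor
    · rintro ⟨huy, rfl | hy⟩
      · rfl
      · exact absurd huy (hu y hy)
    · rintro rfl
      exact ⟨hw, .inl rfl⟩

lemma IsTotalDomSet.gammaT_le_graphSum_toLeft (hE : IsTotalDomSet (graphSum G H u v) E)
    {w : α} (hw : G.Adj u w) (hqi : ¬ QuasiIsolated G u) : gammaT G ≤ #E.toLeft := by
  classical
  rcases hE.graphSum_cases with hL | ⟨-, hu⟩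
  · exact gammaT_le_card hL
  · by_contra hlt
    have hS := gammaT_le_card (hE.graphSum_insert_toLeft hw)
    have := card_insert_le w E.toLeft
    exact hqi (quasiIsolated_of_graphSum hE hu hw (by omega))

end GraphSum

section Paths

lemma isTotalDomSet_pathGraph_four : IsTotalDomSet (pathGraph 4) {1, 2} := by
  unfold IsTotalDomSet; simp only [pathGraph_adj]; decide

lemma isVertexCover_pathGraph_four : _root_.IsVertexCover (pathGraph 4) {1, 2} := by
  unfold _root_.IsVertexCover; simp only [pathGraph_adj]; decide

lemma IsVertexCover.two_le_card_pathGraph_four {Y : Finset (Fin 4)}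
    (hY : _root_.IsVertexCover (pathGraph 4) Y) : 2 ≤ #Y := by
  revert Y; unfold _root_.IsVertexCover; simp only [pathGraph_adj]; decide

lemma two_le_card_of_dominates_pathGraph_four_ne_one {R : Finset (Fin 4)}
    (hR : ∀ b, b ≠ 1 → ∃ c ∈ R, (pathGraph 4).Adj b c) : 2 ≤ #R := by
  revert R; simp only [pathGraph_adj]; decide

lemma card_of_dominates_pathGraph_four_ne_zero {R : Finset (Fin 4)}
    (hR : ∀ b, b ≠ 0 → ∃ c ∈ R, (pathGraph 4).Adj b c) :
    2 ≤ #R ∧ (0 ∈ R → 3 ≤ #R) := by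
  revert R; simp only [pathGraph_adj]; decide

lemma isVertexCover_pathGraph_two : _root_.IsVertexCover (pathGraph 2) {0} := by
  unfold _root_.IsVertexCover; simp only [pathGraph_adj]; decide

lemma IsVertexCover.one_le_card_pathGraph_two {Y : Finset (Fin 2)}
    (hY : _root_.IsVertexCover (pathGraph 2) Y) : 1 ≤ #Y := by
  revert Y; unfold _root_.IsVertexCover; simp only [pathGraph_adj]; decide

lemma isGttSet_pathGraph_four : IsGttSet (pathGraph 4) {1, 2} :=
  .of_forall_card_le isTotalDomSet_pathGraph_four isVertexCover_pathGraph_four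
    (fun _ hE => two_le_card_of_dominates_pathGraph_four_ne_one fun b _ => hE b)
    (fun _ hY => hY.two_le_card_pathGraph_four)

end Paths

section Operations
variable {α : Type*} {G : SimpleGraph α} {u : α} {D : Finset α}

lemma IsGttSet.graphSum_unit (hD : IsGttSet G D) (hu : u ∈ D) :
    IsGttSet (graphSum G (⊥ : SimpleGraph Unit) u ()) (D.disjSum ∅) := by
  obtain ⟨hT, hC, hγ, hτ⟩ := hD
  obtain ⟨w, -, hw⟩ := hT u
  refine .of_forall_card_le (isTotalDomSet_graphSum_disjSum hT fun _ => .inr ⟨rfl, hu⟩)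
    (isVertexCover_graphSum_disjSum hC (fun _ _ h => h.elim) (.inl hu))
    (fun E hE => ?_) (fun Y hY => ?_) <;> rw [card_disjSum, card_empty]
  · have := card_toLeft_add_card_toRight (u := E)
    rcases hE.gammaT_le_graphSum_toLeft_or hw with h | ⟨hv, h⟩
    · omega
    · have := card_pos.mpr ⟨_, hv⟩
      omega
  · have := card_toLeft_add_card_toRight (u := Y)
    have := tau_le_card hY.graphSum_toLeft
    omega

lemma IsGttSet.graphSum_pathGraph_two (hD : IsGttSet G D) (hu : u ∈ D)
    (hqi : ¬ QuasiIsolated G u) : IsGttSet (graphSum G (pathGraph 2) u 0) (D.disjSum {0}) := by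
  obtain ⟨hT, hC, hγ, hτ⟩ := hD
  obtain ⟨w, -, hw⟩ := hT u
  have hB (b : Fin 2) :
      (∃ c ∈ ({0} : Finset (Fin 2)), (pathGraph 2).Adj b c) ∨ (b = 0 ∧ u ∈ D) := by
    fin_cases b
    · exact .inr ⟨rfl, hu⟩
    · exact .inl ⟨0, mem_singleton_self _, by simp [pathGraph_adj]⟩
  refine .of_forall_card_le (isTotalDomSet_graphSum_disjSum hT hB)
    (isVertexCover_graphSum_disjSum hC isVertexCover_pathGraph_two (.inl hu))
    (fun E hE => ?_) (fun Y hY => ?_) <;> rw [card_disjSum, card_singleton]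
  · have := card_toLeft_add_card_toRight (u := E)
    have := hE.gammaT_le_graphSum_toLeft hw hqi
    obtain ⟨c, hc, -⟩ := hE.graphSum_toRight (b := 1) (by decide)
    have := card_pos.mpr ⟨c, hc⟩
    omega
  · have := card_toLeft_add_card_toRight (u := Y)
    have := tau_le_card hY.graphSum_toLeft
    have := hY.graphSum_toRight.one_le_card_pathGraph_two
    omega

lemma IsGttSet.graphSum_pathGraph_four_leaf (hD : IsGttSet G D) (hu : u ∈ D) :
    IsGttSet (graphSum G (pathGraph 4) u 0) (D.disjSum {1, 2}) := by
  obtain ⟨hT, hC, hγ, hτ⟩ := hD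
  obtain ⟨w, -, hw⟩ := hT u
  refine .of_forall_card_le
    (isTotalDomSet_graphSum_disjSum hT fun b => .inl (isTotalDomSet_pathGraph_four b))
    (isVertexCover_graphSum_disjSum hC isVertexCover_pathGraph_four (.inl hu))
    (fun E hE => ?_) (fun Y hY => ?_) <;> rw [card_disjSum, card_pair (by decide)]
  · have := card_toLeft_add_card_toRight (u := E)
    obtain ⟨h2, h3⟩ :=
      card_of_dominates_pathGraph_four_ne_zero fun _ hb => hE.graphSum_toRight hb
    rcases hE.gammaT_le_graphSum_toLeft_or hw with h | ⟨hv, h⟩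
    · omega
    · have := h3 hv
      omega
  · have := card_toLeft_add_card_toRight (u := Y)
    have := tau_le_card hY.graphSum_toLeft
    have := hY.graphSum_toRight.two_le_card_pathGraph_four
    omega

lemma IsGttSet.graphSum_pathGraph_four_support (hD : IsGttSet G D) (hqi : ¬ QuasiIsolated G u) :
    IsGttSet (graphSum G (pathGraph 4) u 1) (D.disjSum {1, 2}) := by
  obtain ⟨hT, hC, hγ, hτ⟩ := hD
  obtain ⟨w, -, hw⟩ := hT u
  refine .of_forall_card_le
    (isTotalDomSet_graphSum_disjSum hT fun b => .inl (isTotalDomSet_pathGraph_four b))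
    (isVertexCover_graphSum_disjSum hC isVertexCover_pathGraph_four (.inr (by simp)))
    (fun E hE => ?_) (fun Y hY => ?_) <;> rw [card_disjSum, card_pair (by decide)]
  · have := card_toLeft_add_card_toRight (u := E)
    have := hE.gammaT_le_graphSum_toLeft hw hqi
    have := two_le_card_of_dominates_pathGraph_four_ne_one fun _ hb => hE.graphSum_toRight hb
    omega
  · have := card_toLeft_add_card_toRight (u := Y)
    have := tau_le_card hY.graphSum_toLeft
    have := hY.graphSum_toRight.two_le_card_pathGraph_four
    omega

end Operations

theorem exists_isGttSet_of_inFamilyT {V : Type} {T : SimpleGraph V} (hT : InFamilyT T) :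
    ∃ D, IsGttSet T D := by
  induction hT with
  | base => exact ⟨_, isGttSet_pathGraph_four⟩
  | iso _ he ih =>
    obtain ⟨e⟩ := he
    obtain ⟨D, hD⟩ := ih
    exact ⟨_, hD.map e⟩
  | op1 T u _ hD =>
    obtain ⟨D, hD, hu⟩ := hD
    exact ⟨_, hD.graphSum_pathGraph_four_leaf hu⟩
  | op2 T u _ hD =>
    obtain ⟨D, hD, hu⟩ := hD
    exact ⟨_, hD.graphSum_unit hu⟩
  | op3 T u _ hD hqi =>
    obtain ⟨D, hD, hu⟩ := hD
    exact ⟨_, hD.graphSum_pathGraph_two hu hqi⟩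
  | op4 T u _ hqi ih =>
    obtain ⟨D, hD⟩ := ih
    exact ⟨_, hD.graphSum_pathGraph_four_support hqi⟩

/-- Every tree in `𝒯` satisfies `γ_t = τ` and has a `(γ_t-τ)`-set. -/
theorem stmt19 {V : Type} (T : SimpleGraph V) (hT : InFamilyT T) :
    gammaT T = tau T ∧ ∃ D : Finset V, IsGttSet T D := by
  obtain ⟨D, hD⟩ := exists_isGttSet_of_inFamilyT hT
  exact ⟨hD.gammaT_eq_tau, D, hD⟩
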